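/- Let G1 and G2 be K5-minor-free graphs and let G = G1 #_0 G2 be a 0-sum, so that ℤ^{E(G)} is identified with ℤ^{E(G1)} × ℤ^{E(G2)}. Let W1 and W2 be finite nonempty sets of positive integers, and for i = 1, 2 let S_i ⊆ int(M_{G_i}) be such that int(M_{G_i}) = ⋃_{g ∈ S_i} (g + M_{G_i}) and every element of S_i has last coordinate in W_i. Then every element of int(M_G) lies in (x, y, β) + M_G for some integer β ∈ W1 ∪ W2 with β ≥ max(min W1, min W2) and some x ∈ ℤ^{E(G1)}, y ∈ ℤ^{E(G2)} with (x, β) ∈ int(M_{G1}) and (y, β) ∈ int(M_{G2}); moreover, every such element (x, y, β) lies in int(M_G). -/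

import Mathlib

/-! Basic definitions for cut monoids of finite simple graphs. -/

open Classical in
/-- The cut vector of a vertex set `A`, as a function on `Sym2 V`:
value `1` on pairs with exactly one element in `A`, and `0` otherwise. -/
noncomputable def cutVec {V : Type} (A : Set V) : Sym2 V → ℤ :=
  Sym2.lift ⟨fun v w => if ((v ∈ A) ↔ (w ∈ A)) then 0 else 1,
    fun v w => if_congr iff_comm rfl rfl⟩

variable {V : Type}

/-- The generators `(δ_A, 1)` of the cut monoid of `G`. -/
def cutGens (G : SimpleGraph V) : Set ((G.edgeSet → ℤ) × ℤ) :=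
  {p | ∃ A : Set V, p = (fun e => cutVec A e.1, 1)}

/-- The cut monoid `M_G` of a graph `G`. -/
def cutMonoid (G : SimpleGraph V) : AddSubmonoid ((G.edgeSet → ℤ) × ℤ) :=
  AddSubmonoid.closure (cutGens G)

/-- The group `gp(M_G)` generated by the cut monoid. -/
def cutGroup (G : SimpleGraph V) : AddSubgroup ((G.edgeSet → ℤ) × ℤ) :=
  AddSubgroup.closure (cutGens G)

/-- `M_G` is normal: every `x ∈ gp(M_G)` with `n • x ∈ M_G` for some `n ≥ 1` lies in `M_G`. -/
def CutNormal (G : SimpleGraph V) : Prop :=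
  ∀ x ∈ cutGroup G, (∃ n : ℕ, 1 ≤ n ∧ n • x ∈ cutMonoid G) → x ∈ cutMonoid G

/-- `M_G` is seminormal: every `x ∈ gp(M_G)` with `2 • x ∈ M_G` and `3 • x ∈ M_G`
lies in `M_G`. -/
def CutSeminormal (G : SimpleGraph V) : Prop :=
  ∀ x ∈ cutGroup G, 2 • x ∈ cutMonoid G → 3 • x ∈ cutMonoid G → x ∈ cutMonoid G

/-- Generators of the cone of `M_G`: nonnegative real multiples of the `(δ_A, 1)`. -/
noncomputable def cutConeGens (G : SimpleGraph V) : Set ((G.edgeSet → ℝ) × ℝ) :=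
  {q | ∃ (c : ℝ) (A : Set V), 0 ≤ c ∧
    q = c • ((fun e => ((cutVec A e.1 : ℤ) : ℝ), (1 : ℝ)))}

/-- The cone `cone(M_G)`: all finite nonnegative real combinations of the `(δ_A, 1)`. -/
noncomputable def cutCone (G : SimpleGraph V) : Set ((G.edgeSet → ℝ) × ℝ) :=
  (AddSubmonoid.closure (cutConeGens G) : Set ((G.edgeSet → ℝ) × ℝ))

/-- The canonical map from `ℤ^E × ℤ` to `ℝ^E × ℝ`. -/
noncomputable def toRealCut (G : SimpleGraph V) (p : (G.edgeSet → ℤ) × ℤ) :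
    (G.edgeSet → ℝ) × ℝ :=
  (fun e => ((p.1 e : ℤ) : ℝ), ((p.2 : ℤ) : ℝ))

/-- `int(M_G)`: elements of `M_G` mapping into the topological interior of `cone(M_G)`. -/
noncomputable def cutInterior (G : SimpleGraph V) : Set ((G.edgeSet → ℤ) × ℤ) :=
  {p | p ∈ cutMonoid G ∧ toRealCut G p ∈ interior (cutCone G)}

/-- The set of last coordinates `α ∈ ℕ` realized by elements of `int(M_G)`;
its least element is `m(G)`. -/
noncomputable def cutDegrees (G : SimpleGraph V) : Set ℕ :=
  {α | ∃ x : G.edgeSet → ℤ, ((x, (α : ℤ)) : (G.edgeSet → ℤ) × ℤ) ∈ cutInterior G}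

/-- `H` is a minor of `G`: branch sets `B u` are nonempty, pairwise disjoint,
induce connected subgraphs, and edges of `H` are witnessed by edges of `G`. -/
def GraphMinor {W V : Type} (H : SimpleGraph W) (G : SimpleGraph V) : Prop :=
  ∃ B : W → Set V,
    (∀ u, (B u).Nonempty) ∧
    (∀ u v, u ≠ v → Disjoint (B u) (B v)) ∧
    (∀ u, (G.induce (B u)).Connected) ∧
    (∀ u v, H.Adj u v → ∃ a ∈ B u, ∃ b ∈ B v, G.Adj a b)

/-- `G` is `K₅`-minor-free. -/
def K5Free (G : SimpleGraph V) : Prop :=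
  ¬ GraphMinor (⊤ : SimpleGraph (Fin 5)) G

/-- `G` is bipartite: vertices split into two parts so every edge joins the parts. -/
def BipartiteG (G : SimpleGraph V) : Prop :=
  ∃ s : Set V, ∀ ⦃v w⦄, G.Adj v w → ((v ∈ s ∧ w ∉ s) ∨ (w ∈ s ∧ v ∉ s))

/-- `G` has an induced cycle of length `n` (n ≥ 3): an induced-subgraph copy of the
cycle graph of length `n`. -/
def HasInducedCycleLen (G : SimpleGraph V) (n : ℕ) : Prop :=
  3 ≤ n ∧ Nonempty (SimpleGraph.cycleGraph n ↪g G)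

/-- `G` contains a triangle. -/
def HasTriangle (G : SimpleGraph V) : Prop :=
  ∃ a b c, G.Adj a b ∧ G.Adj b c ∧ G.Adj a c

/-- `G` is chordal: every induced cycle is a triangle. -/
def ChordalG (G : SimpleGraph V) : Prop :=
  ∀ n, HasInducedCycleLen G n → n = 3

/-- `G` is bridgeless: every edge lies on some cycle. -/
def BridgelessG (G : SimpleGraph V) : Prop :=
  ∀ e ∈ G.edgeSet, ∃ (v : V) (c : G.Walk v v), c.IsCycle ∧ e ∈ c.edges

/-- `G` is (isomorphic to) a cycle of length `n`. -/
def IsCycleOfLen (G : SimpleGraph V) (n : ℕ) : Prop :=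
  3 ≤ n ∧ Nonempty (G ≃g SimpleGraph.cycleGraph n)

/-- `G` is a cycle. -/
def IsCycleGraph (G : SimpleGraph V) : Prop :=
  ∃ n, IsCycleOfLen G n

/-- `G` is a `0`-sum of `G1` and `G2`: copies of `G1`, `G2` cover `G`,
overlap in exactly one vertex, and every edge comes from `G1` or `G2`. -/
def IsZeroSumDecomp {V1 V2 : Type} (G : SimpleGraph V) (G1 : SimpleGraph V1)
    (G2 : SimpleGraph V2) : Prop :=
  ∃ (f1 : V1 ↪ V) (f2 : V2 ↪ V),
    Set.range f1 ∪ Set.range f2 = Set.univ ∧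
    (∃ v, Set.range f1 ∩ Set.range f2 = {v}) ∧
    (∀ a b, G.Adj a b ↔
      ((∃ x y, f1 x = a ∧ f1 y = b ∧ G1.Adj x y) ∨
       (∃ x y, f2 x = a ∧ f2 y = b ∧ G2.Adj x y)))

/-- `G` is a `1`-sum of `G1` and `G2` along a common edge. -/
def IsOneSumDecomp {V1 V2 : Type} (G : SimpleGraph V) (G1 : SimpleGraph V1)
    (G2 : SimpleGraph V2) : Prop :=
  ∃ (f1 : V1 ↪ V) (f2 : V2 ↪ V) (v w : V),
    v ≠ w ∧
    Set.range f1 ∪ Set.range f2 = Set.univ ∧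
    Set.range f1 ∩ Set.range f2 = {v, w} ∧
    (∃ x y, f1 x = v ∧ f1 y = w ∧ G1.Adj x y) ∧
    (∃ x y, f2 x = v ∧ f2 y = w ∧ G2.Adj x y) ∧
    (∀ a b, G.Adj a b ↔
      ((∃ x y, f1 x = a ∧ f1 y = b ∧ G1.Adj x y) ∨
       (∃ x y, f2 x = a ∧ f2 y = b ∧ G2.Adj x y)))

/-- Ring graphs: obtained, up to adding isolated vertices, from finitely many
(finite) trees and cycles by iterated `0`-sums and `1`-sums. -/
inductive IsRingGraph : {V : Type} → SimpleGraph V → Prop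
  | tree {V : Type} (G : SimpleGraph V) :
      Finite V → G.Connected → G.IsAcyclic → IsRingGraph G
  | cycle {V : Type} (G : SimpleGraph V) : IsCycleGraph G → IsRingGraph G
  | zeroSum {V1 V2 V : Type} {G1 : SimpleGraph V1} {G2 : SimpleGraph V2}
      {G : SimpleGraph V} :
      IsRingGraph G1 → IsRingGraph G2 → IsZeroSumDecomp G G1 G2 → IsRingGraph G
  | oneSum {V1 V2 V : Type} {G1 : SimpleGraph V1} {G2 : SimpleGraph V2}
      {G : SimpleGraph V} :
      IsRingGraph G1 → IsRingGraph G2 → IsOneSumDecomp G G1 G2 → IsRingGraph G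
  | addIsolated {V W : Type} {G : SimpleGraph V} {H : SimpleGraph W} (f : V ↪ W) :
      IsRingGraph G → (∀ a b, H.Adj a b ↔ ∃ x y, f x = a ∧ f y = b ∧ G.Adj x y) →
      IsRingGraph H

/-- An edge of an induced subgraph is an edge of the ambient graph. -/
lemma induce_edge_mem (G : SimpleGraph V) (s : Set V) (e : Sym2 s)
    (he : e ∈ (G.induce s).edgeSet) : e.map Subtype.val ∈ G.edgeSet := by
  induction e using Sym2.ind with
  | _ a b =>
    rw [Sym2.map_pair_eq, SimpleGraph.mem_edgeSet]
    exact he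

/-- Restriction of a vector indexed by the edges of `G` to the edges of the
subgraph of `G` induced on `s`. -/
noncomputable def restrictCut (G : SimpleGraph V) (s : Set V) (p : G.edgeSet → ℤ) :
    (G.induce s).edgeSet → ℤ :=
  fun e => p ⟨e.1.map Subtype.val, induce_edge_mem G s e.1 e.2⟩

/-! Restricting to the two sides identifies `ℤ^E × ℤ` with the fibre product, over the last
coordinate, of `ℤ^{E₁} × ℤ` and `ℤ^{E₂} × ℤ`, and under this identification `M_G`, `cone(M_G)`
and `int(M_G)` are the fibre products of the corresponding objects for `G₁` and `G₂`. Cuts glue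
because `δ_A = δ_{Aᶜ}`: two cuts can be made to agree at the shared vertex.

Given `p ∈ int(M_G)`, write its two restrictions as `g_i + m_i` with `g_i ∈ S_i`. If
`deg g₂ ≤ deg g₁`, a piece of `m₂` of degree `deg g₁ - deg g₂` can be split off and added to
`g₂`; gluing `g₁` with the result gives the required element of degree `deg g₁`. -/

def induceEdge (G : SimpleGraph V) (s : Set V) (e : (G.induce s).edgeSet) : G.edgeSet :=
  ⟨e.1.map Subtype.val, induce_edge_mem G s e.1 e.2⟩

theorem induceEdge_injective (G : SimpleGraph V) (s : Set V) :
    Function.Injective (induceEdge G s) := fun _ _ h =>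
  Subtype.ext (Sym2.map.injective Subtype.val_injective (congrArg Subtype.val h))

theorem isOpenMap_comp_of_injective {ι κ X : Type*} [TopologicalSpace X] {f : ι → κ}
    (hf : f.Injective) : IsOpenMap fun x : κ → X => x ∘ f := by
  refine .of_sections fun x =>
    ⟨fun y => Function.extend f y x, ?_, ?_, fun y => Function.extend_comp hf y x⟩
  · refine (continuous_pi fun k => ?_).continuousAt
    by_cases hk : ∃ i, f i = k
    · obtain ⟨i, rfl⟩ := hk
      simpa only [hf.extend_apply] using continuous_apply i
    · simpa only [Function.extend_apply' _ _ _ hk] using continuous_const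
  · funext k
    by_cases hk : ∃ i, f i = k
    · obtain ⟨i, rfl⟩ := hk
      exact hf.extend_apply _ _ i
    · exact Function.extend_apply' _ _ _ hk

open Classical in
theorem cutVec_mk (A : Set V) (a b : V) :
    cutVec A s(a, b) = if (a ∈ A ↔ b ∈ A) then 0 else 1 := rfl

theorem cutVec_compl (A : Set V) : cutVec Aᶜ = cutVec A := by
  ext e
  induction e using Sym2.ind with
  | _ a b =>
    rw [cutVec_mk, cutVec_mk]
    split_ifs <;> simp_all [not_iff_not]

theorem cutVec_map_val (s A : Set V) (e : Sym2 s) :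
    cutVec A (e.map Subtype.val) = cutVec (Subtype.val ⁻¹' A : Set s) e := by
  induction e using Sym2.ind with
  | _ a b => rfl

theorem exists_cutVec_eq_disjoint_image {s t : Set V} (hst : (s ∩ t).Subsingleton) (A : Set s) :
    ∃ B : Set s, cutVec B = cutVec A ∧ Disjoint (Subtype.val '' B) t := by
  by_cases hA : Disjoint (Subtype.val '' A) t
  · exact ⟨A, rfl, hA⟩
  obtain ⟨_, ⟨⟨u, hus⟩, hu, rfl⟩, hut⟩ := Set.not_disjoint_iff.1 hA
  refine ⟨Aᶜ, cutVec_compl A, Set.disjoint_left.2 ?_⟩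
  rintro _ ⟨⟨w, hws⟩, hw, rfl⟩ hwt
  obtain rfl : w = u := hst ⟨hws, hwt⟩ ⟨hus, hut⟩
  exact hw hu

section Restriction

variable (R : Type*) [Ring R]

noncomputable def cutGen {W : Type} (H : SimpleGraph W) (A : Set W) : (H.edgeSet → R) × R :=
  (fun e => (cutVec A e.1 : R), 1)

@[simp]
theorem cutGen_snd {W : Type} (H : SimpleGraph W) (A : Set W) : (cutGen R H A).2 = 1 :=
  rfl

def edgeRestrict (G : SimpleGraph V) (s : Set V) :
    (G.edgeSet → R) × R →ₗ[R] ((G.induce s).edgeSet → R) × R where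
  toFun p := (fun e => p.1 (induceEdge G s e), p.2)
  map_add' _ _ := rfl
  map_smul' _ _ := rfl

theorem edgeRestrict_cutGen (G : SimpleGraph V) (s A : Set V) :
    edgeRestrict R G s (cutGen R G A) = cutGen R (G.induce s) (Subtype.val ⁻¹' A) :=
  Prod.ext (funext fun e => congrArg (Int.cast (R := R)) (cutVec_map_val s A e.1)) rfl

end Restriction

section CutMonoid

variable {W : Type} {H : SimpleGraph W}

theorem mem_cutGens {p : (H.edgeSet → ℤ) × ℤ} : p ∈ cutGens H ↔ ∃ A, p = cutGen ℤ H A :=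
  Iff.rfl

theorem mem_cutConeGens {q : (H.edgeSet → ℝ) × ℝ} :
    q ∈ cutConeGens H ↔ ∃ (c : ℝ) (A : Set W), 0 ≤ c ∧ q = c • cutGen ℝ H A :=
  Iff.rfl

theorem snd_sum_map_cutGen (R : Type*) [Ring R] (l : List (Set W)) :
    ((l.map (cutGen R H)).sum).2 = l.length := by
  induction l with
  | nil => simp
  | cons A l ih => simp [ih, cutGen, add_comm]

theorem mem_cutMonoid_iff_exists_list {p : (H.edgeSet → ℤ) × ℤ} :
    p ∈ cutMonoid H ↔ ∃ l : List (Set W), (l.map (cutGen ℤ H)).sum = p := by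
  refine ⟨fun hp => ?_, ?_⟩
  · induction hp using AddSubmonoid.closure_induction with
    | mem p hp =>
      obtain ⟨A, rfl⟩ := mem_cutGens.1 hp
      exact ⟨[A], by simp⟩
    | zero => exact ⟨[], rfl⟩
    | add p q _ _ hp hq =>
      obtain ⟨l, rfl⟩ := hp
      obtain ⟨l', rfl⟩ := hq
      exact ⟨l ++ l', by simp⟩
  · rintro ⟨l, rfl⟩
    refine list_sum_mem fun x hx => ?_
    obtain ⟨A, -, rfl⟩ := List.mem_map.1 hx
    exact AddSubmonoid.subset_closure ⟨A, rfl⟩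

theorem snd_nonneg_of_mem_cutMonoid {p : (H.edgeSet → ℤ) × ℤ} (hp : p ∈ cutMonoid H) :
    0 ≤ p.2 := by
  obtain ⟨l, rfl⟩ := mem_cutMonoid_iff_exists_list.1 hp
  rw [snd_sum_map_cutGen]
  exact l.length.cast_nonneg

theorem exists_mem_cutMonoid_add_of_le_snd {p : (H.edgeSet → ℤ) × ℤ} (hp : p ∈ cutMonoid H)
    {a : ℤ} (ha₀ : 0 ≤ a) (ha : a ≤ p.2) :
    ∃ p₁ ∈ cutMonoid H, ∃ p₂ ∈ cutMonoid H, p₁.2 = a ∧ p = p₁ + p₂ := by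
  obtain ⟨l, rfl⟩ := mem_cutMonoid_iff_exists_list.1 hp
  rw [snd_sum_map_cutGen] at ha
  refine ⟨_, mem_cutMonoid_iff_exists_list.2 ⟨l.take a.toNat, rfl⟩,
    _, mem_cutMonoid_iff_exists_list.2 ⟨l.drop a.toNat, rfl⟩, ?_, ?_⟩
  · rw [snd_sum_map_cutGen, List.length_take]
    omega
  · rw [← List.sum_append, ← List.map_append, List.take_append_drop]

theorem snd_nonneg_of_mem_cutCone {q : (H.edgeSet → ℝ) × ℝ} (hq : q ∈ cutCone H) :
    0 ≤ q.2 := by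
  induction hq using AddSubmonoid.closure_induction with
  | mem q hq =>
    obtain ⟨c, A, hc, rfl⟩ := mem_cutConeGens.1 hq
    simpa [cutGen] using hc
  | zero => exact le_rfl
  | add q q' _ _ hq hq' => exact add_nonneg hq hq'

theorem eq_zero_of_mem_cutCone_of_snd_eq_zero {q : (H.edgeSet → ℝ) × ℝ} (hq : q ∈ cutCone H)
    (h₀ : q.2 = 0) : q = 0 := by
  induction hq using AddSubmonoid.closure_induction with
  | mem q hq =>
    obtain ⟨c, A, -, rfl⟩ := mem_cutConeGens.1 hq
    obtain rfl : c = 0 := by simpa [cutGen] using h₀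
    exact zero_smul ℝ _
  | zero => rfl
  | add q q' hq hq' ih ih' =>
    have := snd_nonneg_of_mem_cutCone hq
    have := snd_nonneg_of_mem_cutCone hq'
    rw [Prod.snd_add] at h₀
    rw [ih (by linarith), ih' (by linarith), add_zero]

theorem smul_mem_cutCone {c : ℝ} (hc : 0 ≤ c) {q : (H.edgeSet → ℝ) × ℝ} (hq : q ∈ cutCone H) :
    c • q ∈ cutCone H := by
  induction hq using AddSubmonoid.closure_induction with
  | mem q hq =>
    obtain ⟨d, A, hd, rfl⟩ := mem_cutConeGens.1 hq
    exact AddSubmonoid.subset_closure ⟨c * d, A, mul_nonneg hc hd, smul_smul c d _⟩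
  | zero =>
    rw [smul_zero]
    exact AddSubmonoid.zero_mem _
  | add q q' _ _ hq hq' =>
    rw [smul_add]
    exact AddSubmonoid.add_mem _ hq hq'

theorem toRealCut_add (p p' : (H.edgeSet → ℤ) × ℤ) :
    toRealCut H (p + p') = toRealCut H p + toRealCut H p' := by
  ext <;> simp [toRealCut]

theorem toRealCut_mem_cutCone {p : (H.edgeSet → ℤ) × ℤ} (hp : p ∈ cutMonoid H) :
    toRealCut H p ∈ cutCone H := by
  induction hp using AddSubmonoid.closure_induction with
  | mem p hp =>
    obtain ⟨A, rfl⟩ := mem_cutGens.1 hp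
    exact AddSubmonoid.subset_closure ⟨1, A, zero_le_one, by ext <;> simp [toRealCut, cutGen]⟩
  | zero =>
    rw [show toRealCut H 0 = 0 by ext <;> simp [toRealCut]]
    exact AddSubmonoid.zero_mem _
  | add p p' _ _ hp hp' =>
    rw [toRealCut_add]
    exact AddSubmonoid.add_mem _ hp hp'

theorem add_mem_interior_addSubmonoid {X : Type*} [TopologicalSpace X] [AddGroup X]
    [IsTopologicalAddGroup X] {S : AddSubmonoid X} {x y : X} (hx : x ∈ interior (S : Set X))
    (hy : y ∈ S) : x + y ∈ interior (S : Set X) := by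
  simpa [AddSubmonoid.coe_add_self_eq] using subset_interior_add_left (Set.add_mem_add hx hy)

theorem add_mem_cutInterior {p m : (H.edgeSet → ℤ) × ℤ} (hp : p ∈ cutInterior H)
    (hm : m ∈ cutMonoid H) : p + m ∈ cutInterior H :=
  ⟨add_mem hp.1 hm,
    toRealCut_add p m ▸ add_mem_interior_addSubmonoid hp.2 (toRealCut_mem_cutCone hm)⟩

end CutMonoid

section InducedSubgraph

variable {G : SimpleGraph V} {s : Set V}

theorem edgeRestrict_toRealCut (p : (G.edgeSet → ℤ) × ℤ) :
    edgeRestrict ℝ G s (toRealCut G p) = toRealCut (G.induce s) (edgeRestrict ℤ G s p) :=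
  rfl

theorem edgeRestrict_mem_cutMonoid {p : (G.edgeSet → ℤ) × ℤ} (hp : p ∈ cutMonoid G) :
    edgeRestrict ℤ G s p ∈ cutMonoid (G.induce s) := by
  induction hp using AddSubmonoid.closure_induction with
  | mem p hp =>
    obtain ⟨A, rfl⟩ := mem_cutGens.1 hp
    exact AddSubmonoid.subset_closure ⟨_, edgeRestrict_cutGen ℤ G s A⟩
  | zero =>
    rw [map_zero]
    exact AddSubmonoid.zero_mem _
  | add p p' _ _ hp hp' =>
    rw [map_add]
    exact AddSubmonoid.add_mem _ hp hp'

theorem edgeRestrict_mem_cutCone {q : (G.edgeSet → ℝ) × ℝ} (hq : q ∈ cutCone G) :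
    edgeRestrict ℝ G s q ∈ cutCone (G.induce s) := by
  induction hq using AddSubmonoid.closure_induction with
  | mem q hq =>
    obtain ⟨c, A, hc, rfl⟩ := mem_cutConeGens.1 hq
    refine AddSubmonoid.subset_closure ⟨c, Subtype.val ⁻¹' A, hc, ?_⟩
    rw [map_smul, edgeRestrict_cutGen]
    rfl
  | zero =>
    rw [map_zero]
    exact AddSubmonoid.zero_mem _
  | add q q' _ _ hq hq' =>
    rw [map_add]
    exact AddSubmonoid.add_mem _ hq hq'

theorem continuous_edgeRestrict : Continuous (edgeRestrict ℝ G s) :=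
  (continuous_pi fun _ => (continuous_apply _).comp continuous_fst).prodMk continuous_snd

theorem isOpenMap_edgeRestrict : IsOpenMap (edgeRestrict ℝ G s) :=
  (isOpenMap_comp_of_injective (X := ℝ) (induceEdge_injective G s)).prodMap IsOpenMap.id

theorem edgeRestrict_mem_interior_cutCone {q : (G.edgeSet → ℝ) × ℝ}
    (hq : q ∈ interior (cutCone G)) : edgeRestrict ℝ G s q ∈ interior (cutCone (G.induce s)) :=
  interior_mono (Set.image_subset_iff.2 fun _ => edgeRestrict_mem_cutCone)
    (isOpenMap_edgeRestrict.image_interior_subset _ ⟨q, hq, rfl⟩)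

end InducedSubgraph

section Gluing

variable {G : SimpleGraph V} {V1 V2 : Set V}

theorem exists_cutGen_edgeRestrict_eq (R : Type*) [Ring R] (hV : (V1 ∩ V2).Subsingleton)
    (A1 : Set V1) (A2 : Set V2) : ∃ A : Set V,
      edgeRestrict R G V1 (cutGen R G A) = cutGen R _ A1 ∧
      edgeRestrict R G V2 (cutGen R G A) = cutGen R _ A2 := by
  obtain ⟨B1, hB1, hd1⟩ := exists_cutVec_eq_disjoint_image hV A1
  obtain ⟨B2, hB2, hd2⟩ := exists_cutVec_eq_disjoint_image (Set.inter_comm V1 V2 ▸ hV) A2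
  have hd1' : Disjoint (Subtype.val '' B1) (Set.range (Subtype.val : V2 → V)) := by
    rwa [Subtype.range_coe]
  have hd2' : Disjoint (Subtype.val '' B2) (Set.range (Subtype.val : V1 → V)) := by
    rwa [Subtype.range_coe]
  refine ⟨Subtype.val '' B1 ∪ Subtype.val '' B2, ?_, ?_⟩
  · rw [edgeRestrict_cutGen, Set.preimage_union, Subtype.val_injective.preimage_image,
      Set.preimage_eq_empty hd2', Set.union_empty, cutGen, cutGen, hB1]
  · rw [edgeRestrict_cutGen, Set.preimage_union, Subtype.val_injective.preimage_image,
      Set.preimage_eq_empty hd1', Set.empty_union, cutGen, cutGen, hB2]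

theorem exists_list_edgeRestrict_eq (R : Type*) [Ring R] (hV : (V1 ∩ V2).Subsingleton) :
    ∀ (l1 : List (Set V1)) (l2 : List (Set V2)), l1.length = l2.length →
      ∃ l : List (Set V),
        edgeRestrict R G V1 (l.map (cutGen R G)).sum = (l1.map (cutGen R _)).sum ∧
        edgeRestrict R G V2 (l.map (cutGen R G)).sum = (l2.map (cutGen R _)).sum
  | [], [], _ => ⟨[], by simp, by simp⟩
  | A1 :: l1, A2 :: l2, h => by
    obtain ⟨A, hA1, hA2⟩ := exists_cutGen_edgeRestrict_eq (G := G) R hV A1 A2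
    obtain ⟨l, hl1, hl2⟩ := exists_list_edgeRestrict_eq R hV l1 l2 (by simpa using h)
    exact ⟨A :: l, by simp [hA1, hl1], by simp [hA2, hl2]⟩

theorem exists_mem_cutMonoid_edgeRestrict_eq (hV : (V1 ∩ V2).Subsingleton)
    {x1 : ((G.induce V1).edgeSet → ℤ) × ℤ} {x2 : ((G.induce V2).edgeSet → ℤ) × ℤ}
    (hx1 : x1 ∈ cutMonoid (G.induce V1)) (hx2 : x2 ∈ cutMonoid (G.induce V2))
    (h : x1.2 = x2.2) :
    ∃ p ∈ cutMonoid G, edgeRestrict ℤ G V1 p = x1 ∧ edgeRestrict ℤ G V2 p = x2 := by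
  obtain ⟨l1, rfl⟩ := mem_cutMonoid_iff_exists_list.1 hx1
  obtain ⟨l2, rfl⟩ := mem_cutMonoid_iff_exists_list.1 hx2
  rw [snd_sum_map_cutGen, snd_sum_map_cutGen, Nat.cast_inj] at h
  obtain ⟨l, hl1, hl2⟩ := exists_list_edgeRestrict_eq ℤ hV l1 l2 h
  exact ⟨_, mem_cutMonoid_iff_exists_list.2 ⟨l, rfl⟩, hl1, hl2⟩

/- Rescaling each side by the degree of the other makes gluing bi-additive, so that it suffices
to glue generators. -/
theorem exists_mem_cutCone_edgeRestrict_eq_smul (hV : (V1 ∩ V2).Subsingleton)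
    {a1 : ((G.induce V1).edgeSet → ℝ) × ℝ} {a2 : ((G.induce V2).edgeSet → ℝ) × ℝ}
    (ha1 : a1 ∈ cutCone (G.induce V1)) (ha2 : a2 ∈ cutCone (G.induce V2)) :
    ∃ c ∈ cutCone G, edgeRestrict ℝ G V1 c = a2.2 • a1 ∧ edgeRestrict ℝ G V2 c = a1.2 • a2 := by
  induction ha1 using AddSubmonoid.closure_induction with
  | mem a1 ha1 =>
    obtain ⟨c1, A1, hc1, rfl⟩ := mem_cutConeGens.1 ha1
    induction ha2 using AddSubmonoid.closure_induction with
    | mem a2 ha2 =>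
      obtain ⟨c2, A2, hc2, rfl⟩ := mem_cutConeGens.1 ha2
      obtain ⟨A, hA1, hA2⟩ := exists_cutGen_edgeRestrict_eq (G := G) ℝ hV A1 A2
      refine ⟨(c1 * c2) • cutGen ℝ G A,
        AddSubmonoid.subset_closure ⟨_, A, mul_nonneg hc1 hc2, rfl⟩, ?_, ?_⟩
      · rw [map_smul, hA1, Prod.smul_snd, cutGen_snd, smul_eq_mul, mul_one, smul_smul, mul_comm]
      · rw [map_smul, hA2, Prod.smul_snd, cutGen_snd, smul_eq_mul, mul_one, smul_smul]
    | zero => exact ⟨0, AddSubmonoid.zero_mem _, by simp, by simp⟩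
    | add a2 a2' _ _ ih ih' =>
      obtain ⟨c, hc, h1, h2⟩ := ih
      obtain ⟨c', hc', h1', h2'⟩ := ih'
      exact ⟨c + c', AddSubmonoid.add_mem _ hc hc', by simp [h1, h1', add_smul],
        by simp [h2, h2', smul_add]⟩
  | zero => exact ⟨0, AddSubmonoid.zero_mem _, by simp, by simp⟩
  | add a1 a1' _ _ ih ih' =>
    obtain ⟨c, hc, h1, h2⟩ := ih
    obtain ⟨c', hc', h1', h2'⟩ := ih'
    exact ⟨c + c', AddSubmonoid.add_mem _ hc hc', by simp [h1, h1', smul_add],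
      by simp [h2, h2', add_smul]⟩

theorem exists_mem_cutCone_edgeRestrict_eq (hV : (V1 ∩ V2).Subsingleton)
    {a1 : ((G.induce V1).edgeSet → ℝ) × ℝ} {a2 : ((G.induce V2).edgeSet → ℝ) × ℝ}
    (ha1 : a1 ∈ cutCone (G.induce V1)) (ha2 : a2 ∈ cutCone (G.induce V2)) (h : a1.2 = a2.2) :
    ∃ c ∈ cutCone G, edgeRestrict ℝ G V1 c = a1 ∧ edgeRestrict ℝ G V2 c = a2 := by
  rcases (snd_nonneg_of_mem_cutCone ha1).eq_or_lt with h₀ | hpos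
  · refine ⟨0, AddSubmonoid.zero_mem _, ?_, ?_⟩
    · rw [map_zero, eq_zero_of_mem_cutCone_of_snd_eq_zero ha1 h₀.symm]
    · rw [map_zero, eq_zero_of_mem_cutCone_of_snd_eq_zero ha2 (h ▸ h₀.symm)]
  · obtain ⟨c, hc, h1, h2⟩ := exists_mem_cutCone_edgeRestrict_eq_smul hV ha1 ha2
    refine ⟨a1.2⁻¹ • c, smul_mem_cutCone (inv_nonneg.2 hpos.le) hc, ?_, ?_⟩
    · rw [map_smul, h1, ← h, inv_smul_smul₀ hpos.ne']
    · rw [map_smul, h2, inv_smul_smul₀ hpos.ne']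

theorem exists_induceEdge_eq
    (hE : ∀ a b, G.Adj a b → ((a ∈ V1 ∧ b ∈ V1) ∨ (a ∈ V2 ∧ b ∈ V2))) (e : G.edgeSet) :
    (∃ e1, induceEdge G V1 e1 = e) ∨ (∃ e2, induceEdge G V2 e2 = e) := by
  obtain ⟨e, he⟩ := e
  induction e using Sym2.ind with
  | _ a b =>
    rcases hE a b he with ⟨ha, hb⟩ | ⟨ha, hb⟩
    · exact .inl ⟨⟨s(⟨a, ha⟩, ⟨b, hb⟩), he⟩, rfl⟩
    · exact .inr ⟨⟨s(⟨a, ha⟩, ⟨b, hb⟩), he⟩, rfl⟩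

theorem eq_of_edgeRestrict_eq {R : Type*} [Ring R]
    (hE : ∀ a b, G.Adj a b → ((a ∈ V1 ∧ b ∈ V1) ∨ (a ∈ V2 ∧ b ∈ V2)))
    {p q : (G.edgeSet → R) × R} (h1 : edgeRestrict R G V1 p = edgeRestrict R G V1 q)
    (h2 : edgeRestrict R G V2 p = edgeRestrict R G V2 q) : p = q := by
  refine Prod.ext (funext fun e => ?_) (congrArg Prod.snd h1 :)
  obtain ⟨e1, rfl⟩ | ⟨e2, rfl⟩ := exists_induceEdge_eq hE e
  · exact congrFun (congrArg Prod.fst h1) e1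
  · exact congrFun (congrArg Prod.fst h2) e2

end Gluing

section FibreProduct

variable {G : SimpleGraph V} {V1 V2 : Set V} (hV : (V1 ∩ V2).Subsingleton)
  (hE : ∀ a b, G.Adj a b → ((a ∈ V1 ∧ b ∈ V1) ∨ (a ∈ V2 ∧ b ∈ V2)))
include hV hE

theorem mem_cutMonoid_iff_edgeRestrict {p : (G.edgeSet → ℤ) × ℤ} :
    p ∈ cutMonoid G ↔ edgeRestrict ℤ G V1 p ∈ cutMonoid (G.induce V1) ∧
      edgeRestrict ℤ G V2 p ∈ cutMonoid (G.induce V2) := by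
  refine ⟨fun hp => ⟨edgeRestrict_mem_cutMonoid hp, edgeRestrict_mem_cutMonoid hp⟩,
    fun ⟨h1, h2⟩ => ?_⟩
  obtain ⟨q, hq, hq1, hq2⟩ := exists_mem_cutMonoid_edgeRestrict_eq hV h1 h2 rfl
  rwa [← eq_of_edgeRestrict_eq hE hq1 hq2]

theorem mem_cutCone_iff_edgeRestrict {q : (G.edgeSet → ℝ) × ℝ} :
    q ∈ cutCone G ↔ edgeRestrict ℝ G V1 q ∈ cutCone (G.induce V1) ∧
      edgeRestrict ℝ G V2 q ∈ cutCone (G.induce V2) := by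
  refine ⟨fun hq => ⟨edgeRestrict_mem_cutCone hq, edgeRestrict_mem_cutCone hq⟩,
    fun ⟨h1, h2⟩ => ?_⟩
  obtain ⟨c, hc, hc1, hc2⟩ := exists_mem_cutCone_edgeRestrict_eq hV h1 h2 rfl
  rwa [← eq_of_edgeRestrict_eq hE hc1 hc2]

theorem mem_interior_cutCone_iff_edgeRestrict {q : (G.edgeSet → ℝ) × ℝ} :
    q ∈ interior (cutCone G) ↔ edgeRestrict ℝ G V1 q ∈ interior (cutCone (G.induce V1)) ∧
      edgeRestrict ℝ G V2 q ∈ interior (cutCone (G.induce V2)) := by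
  refine ⟨fun hq => ⟨edgeRestrict_mem_interior_cutCone hq, edgeRestrict_mem_interior_cutCone hq⟩,
    fun h => interior_maximal (t := edgeRestrict ℝ G V1 ⁻¹' interior (cutCone (G.induce V1)) ∩
      edgeRestrict ℝ G V2 ⁻¹' interior (cutCone (G.induce V2))) ?_ ?_ h⟩
  · exact fun q' ⟨h1, h2⟩ =>
      (mem_cutCone_iff_edgeRestrict hV hE).2 ⟨interior_subset h1, interior_subset h2⟩
  · exact (isOpen_interior.preimage continuous_edgeRestrict).inter
      (isOpen_interior.preimage continuous_edgeRestrict)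

theorem mem_cutInterior_iff_edgeRestrict {p : (G.edgeSet → ℤ) × ℤ} :
    p ∈ cutInterior G ↔ edgeRestrict ℤ G V1 p ∈ cutInterior (G.induce V1) ∧
      edgeRestrict ℤ G V2 p ∈ cutInterior (G.induce V2) := by
  simp only [cutInterior, Set.mem_ofPred_eq, mem_cutMonoid_iff_edgeRestrict hV hE,
    mem_interior_cutCone_iff_edgeRestrict hV hE, edgeRestrict_toRealCut]
  exact and_and_and_comm

theorem exists_mem_cutInterior_add_of_snd_le {p : (G.edgeSet → ℤ) × ℤ}
    {g1 m1 : ((G.induce V1).edgeSet → ℤ) × ℤ} {g2 m2 : ((G.induce V2).edgeSet → ℤ) × ℤ}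
    (hg1 : g1 ∈ cutInterior (G.induce V1)) (hm1 : m1 ∈ cutMonoid (G.induce V1))
    (hp1 : edgeRestrict ℤ G V1 p = g1 + m1)
    (hg2 : g2 ∈ cutInterior (G.induce V2)) (hm2 : m2 ∈ cutMonoid (G.induce V2))
    (hp2 : edgeRestrict ℤ G V2 p = g2 + m2) (hle : g2.2 ≤ g1.2) :
    ∃ q ∈ cutInterior G, ∃ m ∈ cutMonoid G, q.2 = g1.2 ∧ p = q + m := by
  have hdeg1 : p.2 = g1.2 + m1.2 := congrArg Prod.snd hp1
  have hdeg2 : p.2 = g2.2 + m2.2 := congrArg Prod.snd hp2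
  have := snd_nonneg_of_mem_cutMonoid hm1
  obtain ⟨m2a, hm2a, m2b, hm2b, hdeg, rfl⟩ :=
    exists_mem_cutMonoid_add_of_le_snd hm2 (a := g1.2 - g2.2) (by omega) (by omega)
  rw [Prod.snd_add] at hdeg2
  obtain ⟨q, -, hqV1, hqV2⟩ := exists_mem_cutMonoid_edgeRestrict_eq hV hg1.1
    (add_mem hg2.1 hm2a) (by rw [Prod.snd_add]; omega)
  obtain ⟨m, hm, hmV1, hmV2⟩ := exists_mem_cutMonoid_edgeRestrict_eq hV hm1 hm2b (by omega)
  refine ⟨q, (mem_cutInterior_iff_edgeRestrict hV hE).2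
    ⟨hqV1 ▸ hg1, hqV2 ▸ add_mem_cutInterior hg2 hm2a⟩, m, hm, congrArg Prod.snd hqV1, ?_⟩
  refine eq_of_edgeRestrict_eq hE ?_ ?_
  · rw [map_add, hp1, hqV1, hmV1]
  · rw [map_add, hp2, hqV2, hmV2, add_assoc]

theorem exists_mem_cutInterior_add {p : (G.edgeSet → ℤ) × ℤ}
    {g1 m1 : ((G.induce V1).edgeSet → ℤ) × ℤ} {g2 m2 : ((G.induce V2).edgeSet → ℤ) × ℤ}
    (hg1 : g1 ∈ cutInterior (G.induce V1)) (hm1 : m1 ∈ cutMonoid (G.induce V1))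
    (hp1 : edgeRestrict ℤ G V1 p = g1 + m1)
    (hg2 : g2 ∈ cutInterior (G.induce V2)) (hm2 : m2 ∈ cutMonoid (G.induce V2))
    (hp2 : edgeRestrict ℤ G V2 p = g2 + m2) :
    ∃ q ∈ cutInterior G, ∃ m ∈ cutMonoid G, q.2 = max g1.2 g2.2 ∧ p = q + m := by
  rcases le_total g2.2 g1.2 with h | h
  · rw [max_eq_left h]
    exact exists_mem_cutInterior_add_of_snd_le hV hE hg1 hm1 hp1 hg2 hm2 hp2 h
  · rw [max_eq_right h]
    exact exists_mem_cutInterior_add_of_snd_le (Set.inter_comm V1 V2 ▸ hV)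
      (fun a b hab => (hE a b hab).symm) hg2 hm2 hp2 hg1 hm1 hp1 h

end FibreProduct

theorem zeroSum_interior_generators_general {V : Type} (G : SimpleGraph V)
    (V1 V2 : Set V) (v : V)
    (hinter : V1 ∩ V2 = {v})
    (hedges : ∀ a b, G.Adj a b → ((a ∈ V1 ∧ b ∈ V1) ∨ (a ∈ V2 ∧ b ∈ V2)))
    (W1 W2 : Finset ℕ) (hW1 : W1.Nonempty) (hW2 : W2.Nonempty)
    (S1 : Set (((G.induce V1).edgeSet → ℤ) × ℤ))
    (S2 : Set (((G.induce V2).edgeSet → ℤ) × ℤ))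
    (hS1sub : S1 ⊆ cutInterior (G.induce V1))
    (hS2sub : S2 ⊆ cutInterior (G.induce V2))
    (hS1gen : cutInterior (G.induce V1) =
      ⋃ g ∈ S1, (fun m => g + m) ''
        (cutMonoid (G.induce V1) : Set (((G.induce V1).edgeSet → ℤ) × ℤ)))
    (hS2gen : cutInterior (G.induce V2) =
      ⋃ g ∈ S2, (fun m => g + m) ''
        (cutMonoid (G.induce V2) : Set (((G.induce V2).edgeSet → ℤ) × ℤ)))
    (hS1W : ∀ g ∈ S1, ∃ b ∈ W1, g.2 = (b : ℤ))
    (hS2W : ∀ g ∈ S2, ∃ b ∈ W2, g.2 = (b : ℤ)) :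
    (∀ p ∈ cutInterior G, ∃ (q : (G.edgeSet → ℤ) × ℤ) (b : ℕ),
      b ∈ W1 ∪ W2 ∧ max (W1.min' hW1) (W2.min' hW2) ≤ b ∧ q.2 = (b : ℤ) ∧
      ((restrictCut G V1 q.1, (b : ℤ)) ∈ cutInterior (G.induce V1)) ∧
      ((restrictCut G V2 q.1, (b : ℤ)) ∈ cutInterior (G.induce V2)) ∧
      ∃ m ∈ cutMonoid G, p = q + m) ∧
    (∀ (q : (G.edgeSet → ℤ) × ℤ) (b : ℕ), b ∈ W1 ∪ W2 →
      max (W1.min' hW1) (W2.min' hW2) ≤ b → q.2 = (b : ℤ) →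
      ((restrictCut G V1 q.1, (b : ℤ)) ∈ cutInterior (G.induce V1)) →
      ((restrictCut G V2 q.1, (b : ℤ)) ∈ cutInterior (G.induce V2)) →
      q ∈ cutInterior G) := by
  have hV : (V1 ∩ V2).Subsingleton := hinter ▸ Set.subsingleton_singleton
  have hmem (q : (G.edgeSet → ℤ) × ℤ) (b : ℕ) (hb : q.2 = b) : q ∈ cutInterior G ↔
      (restrictCut G V1 q.1, (b : ℤ)) ∈ cutInterior (G.induce V1) ∧
      (restrictCut G V2 q.1, (b : ℤ)) ∈ cutInterior (G.induce V2) := by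
    rw [← hb]
    exact mem_cutInterior_iff_edgeRestrict hV hedges
  refine ⟨fun p hp => ?_, fun q b _ _ hb h1 h2 => (hmem q b hb).2 ⟨h1, h2⟩⟩
  obtain ⟨hp1, hp2⟩ := (mem_cutInterior_iff_edgeRestrict hV hedges).1 hp
  rw [hS1gen] at hp1
  rw [hS2gen] at hp2
  simp only [Set.mem_iUnion, Set.mem_image, SetLike.mem_coe] at hp1 hp2
  obtain ⟨g1, hg1, m1, hm1, hp1⟩ := hp1
  obtain ⟨g2, hg2, m2, hm2, hp2⟩ := hp2
  obtain ⟨b1, hb1, hgb1⟩ := hS1W g1 hg1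
  obtain ⟨b2, hb2, hgb2⟩ := hS2W g2 hg2
  obtain ⟨q, hq, m, hm, hqb, rfl⟩ := exists_mem_cutInterior_add hV hedges
    (hS1sub hg1) hm1 hp1.symm (hS2sub hg2) hm2 hp2.symm
  rw [hgb1, hgb2, ← Nat.cast_max] at hqb
  obtain ⟨hq1, hq2⟩ := (hmem q _ hqb).1 hq
  refine ⟨q, max b1 b2, ?_, max_le_max (W1.min'_le b1 hb1) (W2.min'_le b2 hb2), hqb, hq1, hq2,
    m, hm, rfl⟩
  rcases max_choice b1 b2 with h | h <;> rw [h]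
  exacts [Finset.mem_union_left _ hb1, Finset.mem_union_right _ hb2]

/-- Generators of `int(M_G)` for a `0`-sum `G = G₁ #₀ G₂` of
`K₅`-minor-free graphs, in terms of generating systems of `int(M_{G₁})` and
`int(M_{G₂})` whose last coordinates lie in finite sets `W₁`, `W₂` of positive
integers. -/
theorem zeroSum_interior_generators {V : Type} [Fintype V] (G : SimpleGraph V)
    (V1 V2 : Set V) (v : V)
    (hcover : V1 ∪ V2 = Set.univ) (hinter : V1 ∩ V2 = {v})
    (hedges : ∀ a b, G.Adj a b → ((a ∈ V1 ∧ b ∈ V1) ∨ (a ∈ V2 ∧ b ∈ V2)))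
    (hK51 : K5Free (G.induce V1)) (hK52 : K5Free (G.induce V2))
    (W1 W2 : Finset ℕ) (hW1 : W1.Nonempty) (hW2 : W2.Nonempty)
    (hW1pos : ∀ b ∈ W1, 0 < b) (hW2pos : ∀ b ∈ W2, 0 < b)
    (S1 : Set (((G.induce V1).edgeSet → ℤ) × ℤ))
    (S2 : Set (((G.induce V2).edgeSet → ℤ) × ℤ))
    (hS1sub : S1 ⊆ cutInterior (G.induce V1))
    (hS2sub : S2 ⊆ cutInterior (G.induce V2))
    (hS1gen : cutInterior (G.induce V1) =
      ⋃ g ∈ S1, (fun m => g + m) ''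
        (cutMonoid (G.induce V1) : Set (((G.induce V1).edgeSet → ℤ) × ℤ)))
    (hS2gen : cutInterior (G.induce V2) =
      ⋃ g ∈ S2, (fun m => g + m) ''
        (cutMonoid (G.induce V2) : Set (((G.induce V2).edgeSet → ℤ) × ℤ)))
    (hS1W : ∀ g ∈ S1, ∃ b ∈ W1, g.2 = (b : ℤ))
    (hS2W : ∀ g ∈ S2, ∃ b ∈ W2, g.2 = (b : ℤ)) :
    (∀ p ∈ cutInterior G, ∃ (q : (G.edgeSet → ℤ) × ℤ) (b : ℕ),
      b ∈ W1 ∪ W2 ∧ max (W1.min' hW1) (W2.min' hW2) ≤ b ∧ q.2 = (b : ℤ) ∧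
      ((restrictCut G V1 q.1, (b : ℤ)) ∈ cutInterior (G.induce V1)) ∧
      ((restrictCut G V2 q.1, (b : ℤ)) ∈ cutInterior (G.induce V2)) ∧
      ∃ m ∈ cutMonoid G, p = q + m) ∧
    (∀ (q : (G.edgeSet → ℤ) × ℤ) (b : ℕ), b ∈ W1 ∪ W2 →
      max (W1.min' hW1) (W2.min' hW2) ≤ b → q.2 = (b : ℤ) →
      ((restrictCut G V1 q.1, (b : ℤ)) ∈ cutInterior (G.induce V1)) →
      ((restrictCut G V2 q.1, (b : ℤ)) ∈ cutInterior (G.induce V2)) →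
      q ∈ cutInterior G) :=
  zeroSum_interior_generators_general G V1 V2 v hinter hedges W1 W2 hW1 hW2 S1 S2 hS1sub hS2sub
    hS1gen hS2gen hS1W hS2W
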